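/- Let f : {-1,1}^n → {0,1} with E f = a and β := |f̂_{{1}}| ≤ a. Then W_1[f] ≤ β² + (√(W^{(n)}(a) − a²) + √(W^{(n−1)}(a − β)))², where W^{(m)}(t) := max{ W_1[g] : g : {-1,1}^m → {0,1}, E g = t }. -/

import Mathlib

open Finset

noncomputable def sgn (b : Bool) : ℝ := if b then 1 else -1

noncomputable def bexp (n : ℕ) (g : (Fin n → Bool) → ℝ) : ℝ :=
  (∑ x : Fin n → Bool, g x) / 2 ^ n

noncomputable def fcoef (n : ℕ) (f : (Fin n → Bool) → ℝ) (S : Finset (Fin n)) : ℝ :=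
  bexp n (fun x => f x * ∏ i ∈ S, sgn (x i))

/-- First-order Fourier weight `W₁[f]`. -/
noncomputable def Wone (n : ℕ) (f : (Fin n → Bool) → ℝ) : ℝ :=
  ∑ i : Fin n, (fcoef n f {i}) ^ 2

/-- `W^{(m)}(t)`: the maximal first-order weight over Boolean functions on the
`m`-cube with mean `t`. -/
noncomputable def Wmax (m : ℕ) (t : ℝ) : ℝ :=
  sSup {w | ∃ g : (Fin m → Bool) → ℝ,
    (∀ x, g x = 0 ∨ g x = 1) ∧ bexp m g = t ∧ w = Wone m g}

/-!
Split the cube along the first coordinate. If `p`, `q` are the restrictions of `f` to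
`x₁ = ±1`, labelled so that their means are `a + β` and `a - β`, then `f̂_{1} = ±β` and the
other first-order coefficients of `f` are those of `(p + q) / 2`, so it suffices to bound
`‖p̂ + q̂‖ / 2` in `ℓ²`.

If `2a ≤ 1`, enlarge `supp p` to a set `C` of density `2a`. Then `p = 1_C - 1_{C \ supp p}`,
the second indicator has mean `a - β`, and the function equal to `1_C` on `x₁ = 1` and to `0`
elsewhere has mean `a` and `f̂_{1} = a`, whence `‖1̂_C‖ / 2 ≤ √(W^{(n)}(a) - a²)`; Minkowski's
inequality concludes. If `2a > 1`, Minkowski bounds `‖p̂ + q̂‖ / 2` by the mean of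
`√W^{(n-1)}(a ± β)`, and `a + β` lies farther from `1/2` than `a - β`. Now `W^{(m)}` is symmetric
about `1/2` (pass to complements) and nondecreasing on the attained means in `[0, 1/2]`: adding to
a set `A` points of the halfspace `{x : ⟨1̂_A, x⟩ ≥ 0}`, which covers half of the cube, does not
decrease the first-order weight.
-/

section FirstOrderCoefficients

variable {m : ℕ}

lemma sgn_not (b : Bool) : sgn (!b) = -sgn b := by cases b <;> simp [sgn]

noncomputable def signVec (x : Fin m → Bool) : EuclideanSpace ℝ (Fin m) :=
  WithLp.toLp 2 fun i => sgn (x i)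

lemma signVec_not (x : Fin m → Bool) : signVec (fun i => !x i) = -signVec x := by
  ext i; simp [signVec, sgn_not]

lemma involutive_map_not : Function.Involutive fun x : Fin m → Bool => fun i => !x i :=
  fun x => funext fun i => Bool.not_not (x i)

lemma sum_signVec : ∑ x : Fin m → Bool, signVec x = 0 := by
  have h := Equiv.sum_comp (involutive_map_not (m := m)).toPerm signVec
  simp only [Function.Involutive.coe_toPerm, signVec_not, sum_neg_distrib] at h
  have h2 : (2 : ℝ) • ∑ x : Fin m → Bool, signVec x = 0 := by
    rw [two_smul]
    nth_rewrite 1 [← h]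
    exact neg_add_cancel _
  exact (smul_eq_zero.mp h2).resolve_left two_ne_zero

variable (m) in
noncomputable def coefVec (g : (Fin m → Bool) → ℝ) : EuclideanSpace ℝ (Fin m) :=
  WithLp.toLp 2 fun i => fcoef m g {i}

lemma Wone_eq_norm_sq (g : (Fin m → Bool) → ℝ) : Wone m g = ‖coefVec m g‖ ^ 2 := by
  simp [Wone, coefVec, EuclideanSpace.norm_sq_eq]

lemma coefVec_eq_sum (g : (Fin m → Bool) → ℝ) :
    coefVec m g = (2 ^ m : ℝ)⁻¹ • ∑ x, g x • signVec x := by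
  ext i
  simp [coefVec, fcoef, bexp, signVec, div_eq_inv_mul]

end FirstOrderCoefficients

section Indicators

variable {m : ℕ}

noncomputable def ind (A : Finset (Fin m → Bool)) : (Fin m → Bool) → ℝ :=
  fun x => if x ∈ A then 1 else 0

lemma ind_eq_zero_or_one (A : Finset (Fin m → Bool)) (x : Fin m → Bool) :
    ind A x = 0 ∨ ind A x = 1 := by
  unfold ind; split_ifs <;> simp

lemma exists_eq_ind {g : (Fin m → Bool) → ℝ} (hg : ∀ x, g x = 0 ∨ g x = 1) :
    ∃ A, g = ind A :=
  ⟨univ.filter (g · = 1), funext fun x => by rcases hg x with h | h <;> simp [ind, h]⟩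

lemma bexp_ind (A : Finset (Fin m → Bool)) : bexp m (ind A) = #A / 2 ^ m := by
  simp [bexp, ind, sum_ite_mem]

lemma coefVec_ind (A : Finset (Fin m → Bool)) :
    coefVec m (ind A) = (2 ^ m : ℝ)⁻¹ • ∑ x ∈ A, signVec x := by
  simp [coefVec_eq_sum, ind, ite_smul, sum_ite_mem]

lemma coefVec_ind_of_subset {A B : Finset (Fin m → Bool)} (h : A ⊆ B) :
    coefVec m (ind B) = coefVec m (ind A) + coefVec m (ind (B \ A)) := by
  simp only [coefVec_ind, ← smul_add, add_comm (∑ x ∈ A, _), sum_sdiff h]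

lemma coefVec_ind_compl (A : Finset (Fin m → Bool)) :
    coefVec m (ind Aᶜ) = -coefVec m (ind A) := by
  have h := coefVec_ind_of_subset (subset_univ A)
  rw [coefVec_ind univ, sum_signVec, smul_zero, ← compl_eq_univ_sdiff] at h
  exact (neg_eq_of_add_eq_zero_right h.symm).symm

lemma Wone_ind_compl (A : Finset (Fin m → Bool)) : Wone m (ind Aᶜ) = Wone m (ind A) := by
  rw [Wone_eq_norm_sq, Wone_eq_norm_sq, coefVec_ind_compl, norm_neg]

lemma bexp_ind_compl (A : Finset (Fin m → Bool)) : bexp m (ind Aᶜ) = 1 - bexp m (ind A) := by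
  have hcard : (#Aᶜ : ℝ) = 2 ^ m - #A := by
    rw [card_compl, Nat.cast_sub (card_le_univ A)]
    simp
  rw [bexp_ind, bexp_ind, hcard, sub_div, div_self (by positivity)]

end Indicators

section MaximalWeight

variable {m : ℕ}

lemma Wmax_eq_sSup_ind (t : ℝ) :
    Wmax m t =
      sSup {w | ∃ A : Finset (Fin m → Bool), bexp m (ind A) = t ∧ w = Wone m (ind A)} := by
  unfold Wmax
  congr 1
  ext w
  constructor
  · rintro ⟨g, hg, rfl, rfl⟩
    obtain ⟨A, rfl⟩ := exists_eq_ind hg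
    exact ⟨A, rfl, rfl⟩
  · rintro ⟨A, rfl, rfl⟩
    exact ⟨ind A, ind_eq_zero_or_one A, rfl, rfl⟩

lemma Wone_ind_le_Wmax (A : Finset (Fin m → Bool)) :
    Wone m (ind A) ≤ Wmax m (bexp m (ind A)) := by
  rw [Wmax_eq_sSup_ind]
  refine le_csSup ((Set.finite_range fun B => Wone m (ind B)).bddAbove.mono ?_) ⟨A, rfl, rfl⟩
  rintro _ ⟨B, -, rfl⟩
  exact ⟨B, rfl⟩

lemma Wone_le_Wmax {g : (Fin m → Bool) → ℝ} (hg : ∀ x, g x = 0 ∨ g x = 1) :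
    Wone m g ≤ Wmax m (bexp m g) := by
  obtain ⟨A, rfl⟩ := exists_eq_ind hg
  exact Wone_ind_le_Wmax A

lemma norm_coefVec_ind_le (A : Finset (Fin m → Bool)) :
    ‖coefVec m (ind A)‖ ≤ √(Wmax m (bexp m (ind A))) :=
  Real.le_sqrt_of_sq_le (Wone_eq_norm_sq (ind A) ▸ Wone_ind_le_Wmax A)

lemma Wmax_le {t X : ℝ} (hX : 0 ≤ X)
    (h : ∀ A : Finset (Fin m → Bool), bexp m (ind A) = t → Wone m (ind A) ≤ X) :
    Wmax m t ≤ X := by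
  rw [Wmax_eq_sSup_ind]
  refine Real.sSup_le ?_ hX
  rintro _ ⟨A, hA, rfl⟩
  exact h A hA

lemma Wmax_one_sub (t : ℝ) : Wmax m (1 - t) = Wmax m t := by
  rw [Wmax_eq_sSup_ind, Wmax_eq_sSup_ind]
  congr 1
  ext w
  constructor
  · rintro ⟨A, hA, rfl⟩
    exact ⟨Aᶜ, by rw [bexp_ind_compl, hA, sub_sub_cancel], (Wone_ind_compl A).symm⟩
  · rintro ⟨A, hA, rfl⟩
    exact ⟨Aᶜ, by rw [bexp_ind_compl, hA], (Wone_ind_compl A).symm⟩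

end MaximalWeight

lemma card_le_two_mul_card_filter_nonneg {α : Type*} [Fintype α] {σ : α → α}
    (hσ : Function.Involutive σ) {L : α → ℝ} (hL : ∀ x, L (σ x) = -L x) :
    Fintype.card α ≤ 2 * #{x | 0 ≤ L x} := by
  have hneg : #{x | ¬0 ≤ L x} ≤ #{x | 0 ≤ L x} := by
    refine card_le_card_of_injOn σ (fun x hx => ?_) hσ.injective.injOn
    simp only [coe_filter, Set.mem_ofPred_eq, mem_univ, true_and] at hx ⊢
    rw [hL]
    linarith
  have hsplit := card_filter_add_card_filter_not (s := univ) fun x => 0 ≤ L x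
  rw [card_univ] at hsplit
  omega

section Monotonicity

variable {m : ℕ}

lemma exists_superset_card_eq_Wone_le (A : Finset (Fin m → Bool)) {k : ℕ} (hAk : #A ≤ k)
    (hk : 2 * k ≤ 2 ^ m) : ∃ B, A ⊆ B ∧ #B = k ∧ Wone m (ind A) ≤ Wone m (ind B) := by
  set c := coefVec m (ind A)
  set P : Finset (Fin m → Bool) := {x | 0 ≤ inner ℝ c (signVec x)}
  have hP : 2 ^ m ≤ 2 * #P := by
    simpa using card_le_two_mul_card_filter_nonneg involutive_map_not
      (L := fun x => inner ℝ c (signVec x)) fun x => by simp [signVec_not]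
  obtain ⟨B, hAB, hBP, hB⟩ := exists_subsuperset_card_eq (subset_union_left (s₂ := P)) hAk
    (by have := card_le_card (subset_union_right (s₁ := A) (s₂ := P)); omega)
  refine ⟨B, hAB, hB, ?_⟩
  have hinner : 0 ≤ inner ℝ c (coefVec m (ind (B \ A))) := by
    rw [coefVec_ind, inner_smul_right, inner_sum]
    refine mul_nonneg (by positivity) (sum_nonneg fun x hx => ?_)
    obtain ⟨hxB, hxA⟩ := mem_sdiff.mp hx
    have hxP : x ∈ P := (mem_union.mp (hBP hxB)).resolve_left hxA
    exact (mem_filter.mp hxP).2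
  rw [Wone_eq_norm_sq, Wone_eq_norm_sq, coefVec_ind_of_subset hAB, norm_add_sq_real]
  nlinarith [sq_nonneg ‖coefVec m (ind (B \ A))‖]

-- `Wmax m t = sSup ∅ = 0` when no set has density `t`, hence the witness `A'`.
lemma Wmax_mono_of_two_mul_le_one {s t : ℝ} (A' : Finset (Fin m → Bool))
    (hA' : bexp m (ind A') = t) (hst : s ≤ t) (ht : 2 * t ≤ 1) : Wmax m s ≤ Wmax m t := by
  have hWt := hA' ▸ Wone_ind_le_Wmax A'
  refine Wmax_le ((Wone_eq_norm_sq _ ▸ sq_nonneg _).trans hWt) fun A hA => ?_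
  rw [bexp_ind] at hA hA'
  have hpow : (0 : ℝ) < 2 ^ m := by positivity
  have hAA' : #A ≤ #A' := by
    rw [← hA, ← hA', div_le_div_iff_of_pos_right hpow] at hst
    exact_mod_cast hst
  have hA'half : 2 * #A' ≤ 2 ^ m := by
    rw [← hA', mul_div_assoc', div_le_one hpow] at ht
    exact_mod_cast ht
  obtain ⟨B, -, hB, hAB⟩ := exists_superset_card_eq_Wone_le A hAA' hA'half
  calc Wone m (ind A) ≤ Wone m (ind B) := hAB
    _ ≤ Wmax m (bexp m (ind B)) := Wone_ind_le_Wmax B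
    _ = Wmax m t := by rw [bexp_ind, hB, hA']

lemma Wmax_le_Wmax_of_abs_sub_half_le {s t : ℝ} (A' : Finset (Fin m → Bool))
    (hA' : bexp m (ind A') = t) (h : |t - 1 / 2| ≤ |s - 1 / 2|) : Wmax m s ≤ Wmax m t := by
  wlog ht : 2 * t ≤ 1 generalizing t A'
  · rw [← Wmax_one_sub t]
    refine this A'ᶜ (by rw [bexp_ind_compl, hA']) ?_ (by linarith)
    rwa [show 1 - t - 1 / 2 = -(t - 1 / 2) by ring, abs_neg]
  rcases le_or_gt s t with hst | hts
  · exact Wmax_mono_of_two_mul_le_one A' hA' hst ht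
  · rw [← Wmax_one_sub s]
    refine Wmax_mono_of_two_mul_le_one A' hA' ?_ ht
    rw [abs_of_nonpos (by linarith)] at h
    cases abs_cases (s - 1 / 2) <;> linarith

end Monotonicity

section Restrictions

variable {m : ℕ}

def restrictFirst (f : (Fin (m + 1) → Bool) → ℝ) (b : Bool) : (Fin m → Bool) → ℝ :=
  fun y => f (Fin.cons b y)

lemma sum_cube_succ (F : (Fin (m + 1) → Bool) → ℝ) :
    ∑ x, F x = ∑ y, F (Fin.cons true y) + ∑ y, F (Fin.cons false y) := by
  rw [← (Fin.consEquiv fun _ => Bool).sum_comp, Fintype.sum_prod_type, Fintype.sum_bool]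
  rfl

lemma bexp_succ (f : (Fin (m + 1) → Bool) → ℝ) :
    bexp (m + 1) f = (bexp m (restrictFirst f true) + bexp m (restrictFirst f false)) / 2 := by
  simp only [bexp, restrictFirst, sum_cube_succ f, pow_succ]
  ring

lemma fcoef_zero_succ (f : (Fin (m + 1) → Bool) → ℝ) :
    fcoef (m + 1) f {0} = (bexp m (restrictFirst f true) - bexp m (restrictFirst f false)) / 2 := by
  simp only [fcoef, bexp, restrictFirst, sum_cube_succ, prod_singleton, Fin.cons_zero, sgn, if_true,
    Bool.false_eq_true, if_false, mul_one, mul_neg, sum_neg_distrib, pow_succ]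
  ring

lemma fcoef_succ_succ (f : (Fin (m + 1) → Bool) → ℝ) (i : Fin m) :
    fcoef (m + 1) f {i.succ}
      = (fcoef m (restrictFirst f true) {i} + fcoef m (restrictFirst f false) {i}) / 2 := by
  simp only [fcoef, bexp, restrictFirst, sum_cube_succ, prod_singleton, Fin.cons_succ, pow_succ]
  ring

lemma Wone_succ (f : (Fin (m + 1) → Bool) → ℝ) :
    Wone (m + 1) f = fcoef (m + 1) f {0} ^ 2
      + (‖coefVec m (restrictFirst f true) + coefVec m (restrictFirst f false)‖ / 2) ^ 2 := by
  rw [div_pow, EuclideanSpace.norm_sq_eq, Wone, Fin.sum_univ_succ, sum_div]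
  congr 1
  refine sum_congr rfl fun i _ => ?_
  simp [coefVec, fcoef_succ_succ]
  ring

lemma norm_coefVec_ind_div_two_le (A : Finset (Fin m → Bool)) {a : ℝ}
    (hA : bexp m (ind A) = 2 * a) :
    ‖coefVec m (ind A)‖ / 2 ≤ √(Wmax (m + 1) a - a ^ 2) := by
  set G : (Fin (m + 1) → Bool) → ℝ := fun x => if x 0 then ind A (Fin.tail x) else 0
  have hG : ∀ x, G x = 0 ∨ G x = 1 := fun x => by
    by_cases hx : x 0 <;> simp [G, hx, ind_eq_zero_or_one]
  have hG₁ : restrictFirst G true = ind A := by funext y; simp [G, restrictFirst]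
  have hG₀ : restrictFirst G false = ind ∅ := by funext y; simp [G, restrictFirst, ind]
  have hmean : bexp (m + 1) G = a := by
    rw [bexp_succ, hG₁, hG₀, hA, bexp_ind]
    simp
  have hW := Wone_le_Wmax hG
  rw [hmean, Wone_succ, fcoef_zero_succ, hG₁, hG₀, hA, bexp_ind, coefVec_ind ∅] at hW
  apply Real.le_sqrt_of_sq_le
  simp only [card_empty, CharP.cast_eq_zero, zero_div, sub_zero, sum_empty, smul_zero,
    add_zero] at hW
  linarith

end Restrictions

section MainEstimate

variable {m : ℕ} {A B : Finset (Fin m → Bool)} {a β : ℝ}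

lemma norm_coefVec_add_le_of_two_mul_le_one (hA : bexp m (ind A) = a + β)
    (hB : bexp m (ind B) = a - β) (ha : 2 * a ≤ 1) :
    ‖coefVec m (ind A) + coefVec m (ind B)‖ / 2
      ≤ √(Wmax (m + 1) a - a ^ 2) + √(Wmax m (a - β)) := by
  rw [bexp_ind] at hA hB
  have hpow : (0 : ℝ) < 2 ^ m := by positivity
  have hcard : #A + #B ≤ #(univ : Finset (Fin m → Bool)) := by
    have : (#A + #B : ℝ) ≤ 2 ^ m := by
      rw [div_eq_iff hpow.ne'] at hA hB
      nlinarith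
    simpa using (by exact_mod_cast this : #A + #B ≤ 2 ^ m)
  obtain ⟨C, hAC, -, hC⟩ :=
    exists_subsuperset_card_eq (subset_univ A) (Nat.le_add_right _ _) hcard
  have hCmean : bexp m (ind C) = 2 * a := by
    rw [bexp_ind, hC, Nat.cast_add, add_div, hA, hB]
    ring
  have hCAmean : bexp m (ind (C \ A)) = a - β := by
    rw [bexp_ind, card_sdiff_of_subset hAC, hC, Nat.add_sub_cancel_left, hB]
  have hsplit : coefVec m (ind A) + coefVec m (ind B)
      = coefVec m (ind C) + (coefVec m (ind B) - coefVec m (ind (C \ A))) := by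
    rw [coefVec_ind_of_subset hAC]
    abel
  have hCnorm := norm_coefVec_ind_div_two_le C hCmean
  have hBnorm := norm_coefVec_ind_le B
  have hCAnorm := norm_coefVec_ind_le (C \ A)
  rw [bexp_ind, hB] at hBnorm
  rw [hCAmean] at hCAnorm
  rw [hsplit]
  linarith [norm_add_le (coefVec m (ind C)) (coefVec m (ind B) - coefVec m (ind (C \ A))),
    norm_sub_le (coefVec m (ind B)) (coefVec m (ind (C \ A)))]

lemma norm_coefVec_add_le_of_one_lt_two_mul (hA : bexp m (ind A) = a + β)
    (hB : bexp m (ind B) = a - β) (hβ : 0 ≤ β) (ha : 1 < 2 * a) :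
    ‖coefVec m (ind A) + coefVec m (ind B)‖ / 2 ≤ √(Wmax m (a - β)) := by
  have hcompare : Wmax m (a + β) ≤ Wmax m (a - β) :=
    Wmax_le_Wmax_of_abs_sub_half_le B hB (abs_le_abs (by linarith) (by linarith))
  have hAnorm := norm_coefVec_ind_le A
  have hBnorm := norm_coefVec_ind_le B
  rw [hA] at hAnorm
  rw [hB] at hBnorm
  linarith [norm_add_le (coefVec m (ind A)) (coefVec m (ind B)), Real.sqrt_le_sqrt hcompare]

lemma norm_coefVec_add_le (hA : bexp m (ind A) = a + β) (hB : bexp m (ind B) = a - β)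
    (hβ : 0 ≤ β) :
    ‖coefVec m (ind A) + coefVec m (ind B)‖ / 2
      ≤ √(Wmax (m + 1) a - a ^ 2) + √(Wmax m (a - β)) := by
  rcases le_or_gt (2 * a) 1 with ha | ha
  · exact norm_coefVec_add_le_of_two_mul_le_one hA hB ha
  · exact (norm_coefVec_add_le_of_one_lt_two_mul hA hB hβ ha).trans
      (le_add_of_nonneg_left (Real.sqrt_nonneg _))

end MainEstimate

theorem stmt13_general (n : ℕ) (hn : 0 < n) (f : (Fin n → Bool) → ℝ) (a β : ℝ)
    (hf : ∀ x, f x = 0 ∨ f x = 1) (ha : bexp n f = a)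
    (hβ : β = |fcoef n f {⟨0, hn⟩}|) :
    Wone n f ≤ β ^ 2 +
      (Real.sqrt (Wmax n a - a ^ 2) + Real.sqrt (Wmax (n - 1) (a - β))) ^ 2 := by
  obtain ⟨m, rfl⟩ : ∃ m, n = m + 1 := ⟨n - 1, by omega⟩
  obtain ⟨A, hA⟩ : ∃ A, restrictFirst f true = ind A := exists_eq_ind fun _ => hf _
  obtain ⟨B, hB⟩ : ∃ B, restrictFirst f false = ind B := exists_eq_ind fun _ => hf _
  have hmean := bexp_succ f
  have hcoef := fcoef_zero_succ f
  rw [hA, hB, ha] at hmean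
  rw [hA, hB] at hcoef
  change β = |fcoef (m + 1) f {0}| at hβ
  rw [Wone_succ, hA, hB, Nat.add_sub_cancel, ← sq_abs, ← hβ]
  gcongr
  rcases abs_choice (fcoef (m + 1) f {0}) with h | h
  · exact norm_coefVec_add_le (by linarith) (by linarith) (hβ ▸ abs_nonneg _)
  · rw [add_comm]
    exact norm_coefVec_add_le (by linarith) (by linarith) (hβ ▸ abs_nonneg _)

/-- `W₁[f] ≤ β² + (√(W^{(n)}(a) − a²) + √(W^{(n−1)}(a − β)))²`
for a Boolean `f` with mean `a` and `β = |f̂_{1}| ≤ a`. -/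
theorem stmt13 (n : ℕ) (hn : 0 < n) (f : (Fin n → Bool) → ℝ) (a β : ℝ)
    (hf : ∀ x, f x = 0 ∨ f x = 1) (ha : bexp n f = a)
    (hβ : β = |fcoef n f {⟨0, hn⟩}|) (hβa : β ≤ a) :
    Wone n f ≤ β ^ 2 +
      (Real.sqrt (Wmax n a - a ^ 2) + Real.sqrt (Wmax (n - 1) (a - β))) ^ 2 :=
  stmt13_general n hn f a β hf ha hβ
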